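/- arXiv:1504.07322 — 4 statements merged into one kernel-verified Lean document; each statement's English description precedes it below -/
import Mathlib

section
/- Every even perfect number other than 6 can be written as the sum of 5 cubes of natural numbers; that is, if N is an even perfect number with N ≠ 6, then there exist natural numbers a, b, c, d, e such that N = a³ + b³ + c³ + d³ + e³. -/
/-!
By Euler, an even perfect number is `2 ^ k * (2 ^ (k + 1) - 1)` with `2 ^ (k + 1) - 1` prime, so
`k + 1` is prime; unless `N = 6` it is odd, and `N = P * (2 * P - 1)` with `P = 4 ^ K`.
Write `P = c * s ^ 6` with `c ∈ {1, 4, 16}` and `s = 2 ^ (K / 3)`. As `s ^ 6 = (s ^ 2) ^ 3`, it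
suffices to write `c * (2 * c * s ^ 6 - 1)` as a sum of five cubes; the identity
`(x + y) ^ 3 + (x - y) ^ 3 = 2 * x ^ 3 + 6 * x * y ^ 2` does this, e.g.
`2 * s ^ 6 - 1 = (s ^ 2 + s - 1) ^ 3 + (s ^ 2 - s - 1) ^ 3 + 1 ^ 3`.
For `s = 1` some of these cubes are negative, and `1`, `28`, `496` are treated by hand.
-/

open ArithmeticFunction
open scoped ArithmeticFunction.sigma

theorem sigma_one_two_pow (k : ℕ) : σ 1 (2 ^ k) = mersenne (k + 1) := by
  simp_rw [sigma_one_apply, mersenne, show 2 = 1 + 1 from rfl, ← geom_sum_mul_add 1 (k + 1)]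
  norm_num

theorem Nat.eq_two_pow_mul_prime_mersenne_of_even_perfect {n : ℕ} (ev : Even n)
    (perf : n.Perfect) : ∃ k, (mersenne (k + 1)).Prime ∧ n = 2 ^ k * mersenne (k + 1) := by
  obtain ⟨k, m, hm, rfl⟩ := Nat.exists_eq_two_pow_mul_odd perf.2.ne'
  set M := mersenne (k + 1) with hM
  have hσ : M * σ 1 m = (M + 1) * m := by
    have h := (perfect_iff_sum_divisors_eq_two_mul perf.2).1 perf
    rw [← sigma_one_apply, isMultiplicative_sigma.map_mul_of_coprime
      ((Nat.coprime_two_left.2 hm).pow_left k), sigma_one_two_pow] at h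
    rw [h, hM, succ_mersenne]
    ring
  obtain ⟨j, rfl⟩ : M ∣ m :=
    (Nat.coprime_self_add_right.2 (Nat.coprime_one_right M)).dvd_of_dvd_mul_left ⟨_, hσ.symm⟩
  have hM0 : 0 < M := mersenne_pos.2 k.succ_pos
  have hj : ∑ i ∈ (M * j).properDivisors, i = j := by
    have h : σ 1 (M * j) = M * j + j := by
      apply Nat.eq_of_mul_eq_mul_left hM0
      rw [hσ]
      ring
    rwa [sigma_one_apply, Nat.sum_divisors_eq_sum_properDivisors_add_self, add_comm,
      add_left_cancel_iff] at h
  rcases Nat.sum_properDivisors_dvd (by rw [hj]; exact dvd_mul_left j M) with hj1 | hjm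
  · obtain rfl : j = 1 := hj.symm.trans hj1
    rw [mul_one] at hj1 ⊢
    exact ⟨k, Nat.sum_properDivisors_eq_one_iff_prime.1 hj1, rfl⟩
  · have hM1 : M = 1 := by
      have hj0 : j ≠ 0 := by rintro rfl; simp at hm
      simpa [hj0] using (hj.symm.trans hjm).symm
    obtain rfl : k = 0 := by
      by_contra hk
      have := one_lt_mersenne.2 (by omega : 1 < k + 1)
      omega
    rw [hM1] at ev hm
    exact absurd ev (by simpa using hm)

def IsSumOfFiveCubes (n : ℕ) : Prop :=
  ∃ a b c d e : ℕ, n = a ^ 3 + b ^ 3 + c ^ 3 + d ^ 3 + e ^ 3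

theorem isSumOfFiveCubes_mul_two_mul_sub_one {P : ℕ} (a b c d e : ℕ)
    (h : a ^ 3 + b ^ 3 + c ^ 3 + d ^ 3 + e ^ 3 + P = 2 * P ^ 2) :
    IsSumOfFiveCubes (P * (2 * P - 1)) := by
  refine ⟨a, b, c, d, e, Nat.add_right_cancel (m := P) ?_⟩
  rw [h]
  rcases P with _ | P
  · rfl
  · rw [show 2 * (P + 1) - 1 = 2 * P + 1 by omega]
    ring

-- Writing `s = u + 2` keeps the cubed terms `s ^ 2 (s ^ 2 ± s - 1)` free of truncated subtraction.
theorem isSumOfFiveCubes_pow_six {s : ℕ} (hs : 2 ≤ s) :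
    IsSumOfFiveCubes (s ^ 6 * (2 * s ^ 6 - 1)) := by
  obtain ⟨u, rfl⟩ := Nat.exists_eq_add_of_le' hs
  exact isSumOfFiveCubes_mul_two_mul_sub_one ((u + 2) ^ 2 * (u ^ 2 + 5 * u + 5))
    ((u + 2) ^ 2 * (u ^ 2 + 3 * u + 1)) ((u + 2) ^ 2) 0 0 (by ring)

theorem isSumOfFiveCubes_four_mul_pow_six {s : ℕ} (hs : 2 ≤ s) :
    IsSumOfFiveCubes (4 * s ^ 6 * (2 * (4 * s ^ 6) - 1)) := by
  obtain ⟨u, rfl⟩ := Nat.exists_eq_add_of_le' hs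
  exact isSumOfFiveCubes_mul_two_mul_sub_one ((u + 2) ^ 2 * (2 * u ^ 2 + 10 * u + 11))
    ((u + 2) ^ 2 * (2 * u ^ 2 + 6 * u + 3)) ((u + 2) ^ 2 * (2 * u ^ 2 + 8 * u + 7))
    ((u + 2) ^ 2 * (2 * u ^ 2 + 8 * u + 7)) 0 (by ring)

theorem isSumOfFiveCubes_sixteen_mul_pow_six {s : ℕ} (hs : 2 ≤ s) :
    IsSumOfFiveCubes (16 * s ^ 6 * (2 * (16 * s ^ 6) - 1)) := by
  obtain ⟨u, rfl⟩ := Nat.exists_eq_add_of_le' hs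
  exact isSumOfFiveCubes_mul_two_mul_sub_one (6 * (u + 2) ^ 4) (6 * (u + 2) ^ 4)
    ((u + 2) ^ 2 * (2 * u ^ 2 + 10 * u + 10)) ((u + 2) ^ 2 * (2 * u ^ 2 + 6 * u + 2))
    (4 * (u + 2) ^ 4) (by ring)

theorem isSumOfFiveCubes_four_pow (K : ℕ) : IsSumOfFiveCubes (4 ^ K * (2 * 4 ^ K - 1)) := by
  obtain ⟨t, r, hr, rfl⟩ : ∃ t r, r < 3 ∧ K = 3 * t + r :=
    ⟨K / 3, K % 3, K.mod_lt three_pos, (Nat.div_add_mod K 3).symm⟩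
  rcases Nat.eq_zero_or_pos t with rfl | ht
  · interval_cases r
    exacts [⟨1, 0, 0, 0, 0, rfl⟩, ⟨3, 1, 0, 0, 0, rfl⟩, ⟨6, 6, 4, 0, 0, rfl⟩]
  have hs : 2 ≤ 2 ^ t := Nat.le_self_pow ht.ne' 2
  have hP : 4 ^ (3 * t + r) = 4 ^ r * (2 ^ t) ^ 6 := by
    rw [pow_add, mul_comm, ← pow_mul, pow_mul, mul_comm t, pow_mul]
    norm_num
  rw [hP]
  interval_cases r
  · simpa using isSumOfFiveCubes_pow_six hs
  · simpa using isSumOfFiveCubes_four_mul_pow_six hs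
  · simpa using isSumOfFiveCubes_sixteen_mul_pow_six hs

theorem even_perfect_sum_five_cubes (N : ℕ) (hperf : Nat.Perfect N)
    (heven : Even N) (hne : N ≠ 6) :
    ∃ a b c d e : ℕ, N = a ^ 3 + b ^ 3 + c ^ 3 + d ^ 3 + e ^ 3 := by
  obtain ⟨k, hprime, rfl⟩ := Nat.eq_two_pow_mul_prime_mersenne_of_even_perfect heven hperf
  obtain ⟨K, rfl⟩ : Even k := by
    rcases Nat.even_or_odd k with hk | hk
    · exact hk
    · obtain rfl : k = 1 := by
        have := (Nat.Prime.even_iff hprime.of_mersenne).1 hk.add_one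
        omega
      exact absurd rfl hne
  have hN : 2 ^ (K + K) * mersenne (K + K + 1) = 4 ^ K * (2 * 4 ^ K - 1) := by
    rw [mersenne, ← two_mul, pow_succ', pow_mul]
    norm_num
  exact hN ▸ isSumOfFiveCubes_four_pow K
end

section
/- For every natural number k, the number N = 2^{6k} · (2^{6k+1} − 1) can be written as the sum of 3 cubes of natural numbers; explicitly, with n = 2^k, one has N = (2^{2k}(n² + n − 1))³ + (2^{2k}(n² − n − 1))³ + (2^{2k})³. -/
theorem case_p_eq_six_k_add_one (k : ℕ) :
    (∃ a b c : ℕ,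
        2 ^ (6 * k) * (2 ^ (6 * k + 1) - 1) = a ^ 3 + b ^ 3 + c ^ 3) ∧
    ((2 : ℤ) ^ (6 * k) * (2 ^ (6 * k + 1) - 1) =
        (2 ^ (2 * k) * (((2 : ℤ) ^ k) ^ 2 + 2 ^ k - 1)) ^ 3 +
        (2 ^ (2 * k) * (((2 : ℤ) ^ k) ^ 2 - 2 ^ k - 1)) ^ 3 +
        ((2 : ℤ) ^ (2 * k)) ^ 3) := by
  have e6 : (2:ℤ) ^ (6*k) = ((2:ℤ)^k)^6 := by rw [← pow_mul, Nat.mul_comm]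
  have e2 : (2:ℤ) ^ (2*k) = ((2:ℤ)^k)^2 := by rw [← pow_mul, Nat.mul_comm]
  constructor
  · rcases Nat.eq_zero_or_pos k with rfl | hk
    · exact ⟨1, 0, 0, by norm_num⟩
    · refine ⟨2 ^ (2*k) * ((2^k)^2 + 2^k - 1), 2 ^ (2*k) * ((2^k)^2 - 2^k - 1),
        2 ^ (2*k), ?_⟩
      have h1 : (1:ℕ) ≤ (2^k)^2 + 2^k := le_trans Nat.one_le_two_pow (le_trans (Nat.le_add_right _ _) (Nat.add_comm _ _).le)
      have h2 : 2^k + 1 ≤ (2^k)^2 := by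
        have : 2 ≤ 2^k := by
          calc 2 = 2^1 := by norm_num
          _ ≤ 2^k := Nat.pow_le_pow_right (by norm_num) hk
        nlinarith
      have h3 : (1:ℕ) ≤ 2 ^ (6*k+1) := Nat.one_le_two_pow
      have h4 : 2^k ≤ (2^k)^2 := le_trans (Nat.le_add_right _ 1) h2
      have h5 : (1:ℕ) ≤ (2^k)^2 - 2^k := le_tsub_of_add_le_left h2
      zify [h1, h3, h4, h5]
      rw [e6, e2, pow_add, e6]
      ring
  · rw [pow_add, e6, e2]
    ring
end

section
/- For every natural number k, the number N = 2^{6k+4} · (2^{6k+5} − 1) can be written as the sum of 5 cubes of natural numbers; explicitly, with n = 2^k, one has N = (3 · 2^{4k+1})³ + (3 · 2^{4k+1})³ + (2 · 2^{4k+1})³ + (2^{2k+1}(n² + n − 1))³ + (2^{2k+1}(n² − n − 1))³. -/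
theorem case_p_eq_six_k_add_five (k : ℕ) :
    (∃ a b c d e : ℕ,
        2 ^ (6 * k + 4) * (2 ^ (6 * k + 5) - 1) =
          a ^ 3 + b ^ 3 + c ^ 3 + d ^ 3 + e ^ 3) ∧
    ((2 : ℤ) ^ (6 * k + 4) * (2 ^ (6 * k + 5) - 1) =
        (3 * 2 ^ (4 * k + 1)) ^ 3 + (3 * 2 ^ (4 * k + 1)) ^ 3 +
        (2 * 2 ^ (4 * k + 1)) ^ 3 +
        (2 ^ (2 * k + 1) * (((2 : ℤ) ^ k) ^ 2 + 2 ^ k - 1)) ^ 3 +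
        (2 ^ (2 * k + 1) * (((2 : ℤ) ^ k) ^ 2 - 2 ^ k - 1)) ^ 3) := by
  have key : ((2 : ℤ) ^ (6 * k + 4) * (2 ^ (6 * k + 5) - 1) =
        (3 * 2 ^ (4 * k + 1)) ^ 3 + (3 * 2 ^ (4 * k + 1)) ^ 3 +
        (2 * 2 ^ (4 * k + 1)) ^ 3 +
        (2 ^ (2 * k + 1) * (((2 : ℤ) ^ k) ^ 2 + 2 ^ k - 1)) ^ 3 +
        (2 ^ (2 * k + 1) * (((2 : ℤ) ^ k) ^ 2 - 2 ^ k - 1)) ^ 3) := by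
    have h4 : (2 : ℤ) ^ (4 * k + 1) = ((2:ℤ)^k)^4 * 2 := by
      rw [pow_add, pow_mul', pow_one]
    have h2 : (2 : ℤ) ^ (2 * k + 1) = ((2:ℤ)^k)^2 * 2 := by
      rw [pow_add, pow_mul', pow_one]
    have h64 : (2 : ℤ) ^ (6 * k + 4) = ((2:ℤ)^k)^6 * 16 := by
      rw [pow_add, pow_mul']; norm_num
    have h65 : (2 : ℤ) ^ (6 * k + 5) = ((2:ℤ)^k)^6 * 32 := by
      rw [pow_add, pow_mul']; norm_num
    rw [h4, h2, h64, h65]; ring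
  refine ⟨?_, key⟩
  rcases Nat.eq_zero_or_pos k with rfl | hk
  · exact ⟨0, 0, 4, 6, 6, by norm_num⟩
  refine ⟨3 * 2 ^ (4 * k + 1), 3 * 2 ^ (4 * k + 1), 2 * 2 ^ (4 * k + 1),
      2 ^ (2 * k + 1) * (2 ^ k * 2 ^ k + 2 ^ k - 1),
      2 ^ (2 * k + 1) * (2 ^ k * 2 ^ k - 2 ^ k - 1), ?_⟩
  have h1 : (1:ℕ) ≤ 2 ^ (6 * k + 5) := Nat.one_le_two_pow
  have hn : (2:ℕ) ≤ 2 ^ k := by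
    calc (2:ℕ) = 2 ^ 1 := rfl
    _ ≤ 2 ^ k := Nat.pow_le_pow_right (by norm_num) hk
  have hd : (1:ℕ) ≤ 2 ^ k * 2 ^ k + 2 ^ k := le_trans (le_trans one_le_two hn) (Nat.le_add_left _ _)
  have he : 2 ^ k + 1 ≤ 2 ^ k * 2 ^ k := by nlinarith
  have he' : (1:ℕ) ≤ 2 ^ k * 2 ^ k - 2 ^ k := by omega
  apply @Nat.cast_injective ℤ
  push_cast [Nat.sub_sub, h1, hd, he]
  rw [key]; ring
end

section
/- If N is an even perfect number that can be written as the sum of 2 cubes of natural numbers (i.e., N = a³ + b³ for some natural numbers a, b), then N = 28. -/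
/-!
By the Euclid–Euler theorem `N = 2 ^ k * q` with `q = 2 ^ (k + 1) - 1` prime. Since
`N ≤ (a + b) ^ 3 ≤ 4 N < q ^ 3`, the divisor `a + b` of `N` is prime to `q`, hence a power `2 ^ i`,
and the same bounds force `3 i ∈ {2 k + 1, 2 k + 2}`. In the first case
`3 a b (a + b) = (a + b) ^ 3 - N = 2 ^ k`, which is impossible; in the second `3 ∣ k + 1`, and
`k + 1` is prime because `q` is, so `k = 2` and `N = 4 * 7`.
-/

theorem Nat.sum_divisors_two_pow (k : ℕ) : ∑ d ∈ (2 ^ k).divisors, d = mersenne (k + 1) := by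
  rw [Nat.sum_divisors_prime_pow Nat.prime_two, Nat.geomSum_eq le_rfl, mersenne, Nat.div_one]

theorem Nat.eq_two_pow_mul_mersenne_of_even_perfect {n : ℕ} (heven : Even n) (hperf : n.Perfect) :
    ∃ k, (mersenne (k + 1)).Prime ∧ n = 2 ^ k * mersenne (k + 1) := by
  obtain ⟨k, m, hm, rfl⟩ := Nat.exists_eq_two_pow_mul_odd hperf.2.ne'
  have hk : k ≠ 0 := by
    rintro rfl
    rw [pow_zero, one_mul] at heven
    exact Nat.not_even_iff_odd.2 hm heven
  have hσ : mersenne (k + 1) * ∑ d ∈ m.divisors, d = (mersenne (k + 1) + 1) * m := by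
    rw [← Nat.sum_divisors_two_pow, ← Nat.Coprime.sum_divisors_mul
      (Nat.Coprime.pow_left _ (Nat.coprime_two_left.2 hm)),
      (Nat.perfect_iff_sum_divisors_eq_two_mul hperf.2).1 hperf, Nat.sum_divisors_two_pow,
      succ_mersenne]
    ring
  obtain ⟨j, rfl⟩ : mersenne (k + 1) ∣ m :=
    (Nat.coprime_self_add_right.2 (Nat.coprime_one_right _)).dvd_of_dvd_mul_left ⟨_, hσ.symm⟩
  have hj : ∑ d ∈ (mersenne (k + 1) * j).properDivisors, d = j := by
    rw [Nat.sum_divisors_eq_sum_properDivisors_add_self, mul_left_comm] at hσ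
    have := Nat.eq_of_mul_eq_mul_left (by positivity) hσ
    lia
  have hdvd : ∑ d ∈ (mersenne (k + 1) * j).properDivisors, d ∣ mersenne (k + 1) * j := by
    rw [hj]
    exact Nat.dvd_mul_left j _
  rcases Nat.sum_properDivisors_dvd hdvd with hj1 | hj_self
  · rw [hj] at hj1
    subst hj1
    rw [mul_one] at hj ⊢
    exact ⟨k, Nat.sum_properDivisors_eq_one_iff_prime.1 hj, rfl⟩
  · have hM : 1 < mersenne (k + 1) := one_lt_mersenne.2 (by lia)
    have hj0 : j ≠ 0 := by
      rintro rfl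
      simp at hm
    rw [hj] at hj_self
    nlinarith [Nat.pos_of_ne_zero hj0]

theorem exists_add_eq_pow_of_pow_three_add_pow_three_eq_pow_mul {a b p q k : ℕ}
    (hp : p.Prime) (hq : q.Prime) (hq_large : 4 * p ^ k < q ^ 2)
    (h : a ^ 3 + b ^ 3 = p ^ k * q) : ∃ i ≤ k, a + b = p ^ i := by
  have hdvd : a + b ∣ p ^ k * q := h ▸ Odd.nat_add_dvd_pow_add_pow a b (by decide)
  have hq_not_dvd : ¬q ∣ a + b := by
    intro hq_dvd
    have hpos : 0 < a + b := Nat.pos_of_dvd_of_pos hdvd (by positivity [hp.pos, hq.pos])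
    have := calc
      q ^ 3 ≤ (a + b) ^ 3 := Nat.pow_le_pow_left (Nat.le_of_dvd hpos hq_dvd) 3
      _ ≤ 2 ^ 2 * (a ^ 3 + b ^ 3) := add_pow_le (Nat.zero_le a) (Nat.zero_le b) 3
      _ = 4 * p ^ k * q := by rw [h]; ring
      _ < q ^ 2 * q := Nat.mul_lt_mul_of_pos_right hq_large hq.pos
      _ = q ^ 3 := by ring
    exact lt_irrefl _ this
  exact (Nat.dvd_prime_pow hp).1 <|
    ((hq.coprime_iff_not_dvd).2 hq_not_dvd).symm.dvd_of_dvd_mul_right hdvd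

theorem eq_two_of_pow_three_add_pow_three_eq_two_pow_mul_mersenne {a b k : ℕ}
    (hq : (mersenne (k + 1)).Prime) (h : a ^ 3 + b ^ 3 = 2 ^ k * mersenne (k + 1)) : k = 2 := by
  have hk : (k + 1).Prime := hq.of_mersenne
  have hq1 : mersenne (k + 1) + 1 = 2 * 2 ^ k := by rw [succ_mersenne, pow_succ']
  have h2k : 2 ^ 1 ≤ 2 ^ k := Nat.pow_le_pow_right two_pos (by have := hk.two_le; lia)
  have hq_large : 4 * 2 ^ k < mersenne (k + 1) ^ 2 := by nlinarith
  obtain ⟨i, -, hi⟩ :=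
    exists_add_eq_pow_of_pow_three_add_pow_three_eq_pow_mul Nat.prime_two hq hq_large h
  have hcube : 2 ^ (3 * i) = 2 ^ k * mersenne (k + 1) + 3 * (a * b) * 2 ^ i := by
    rw [pow_mul', ← hi, ← h]
    ring
  have hlow : 2 ^ (2 * k) < 2 ^ (3 * i) := by
    calc 2 ^ (2 * k) = 2 ^ k * 2 ^ k := by ring
    _ < 2 ^ k * mersenne (k + 1) := by gcongr; lia
    _ ≤ 2 ^ (3 * i) := hcube ▸ Nat.le_add_right _ _
  have hhigh : 2 ^ (3 * i) < 2 ^ (2 * k + 3) := by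
    calc 2 ^ (3 * i) = (a + b) ^ 3 := by rw [hi, ← pow_mul']
    _ ≤ 2 ^ 2 * (a ^ 3 + b ^ 3) := add_pow_le (Nat.zero_le a) (Nat.zero_le b) 3
    _ = 2 ^ (k + 2) * mersenne (k + 1) := by rw [h]; ring
    _ < 2 ^ (k + 2) * (2 * 2 ^ k) := by gcongr; lia
    _ = 2 ^ (2 * k + 3) := by ring
  rw [Nat.pow_lt_pow_iff_right (by norm_num)] at hlow hhigh
  obtain h3i | h3i : 3 * i = 2 * k + 1 ∨ 3 * i = 2 * k + 2 := by lia
  · have h3 : 3 * (a * b) * 2 ^ i = 2 ^ k := by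
      have : 2 ^ (3 * i) = 2 ^ k * (mersenne (k + 1) + 1) := by rw [h3i, hq1]; ring
      lia
    have : 3 ∣ 2 := Nat.prime_three.dvd_of_dvd_pow ⟨a * b * 2 ^ i, by rw [← h3]; ring⟩
    norm_num at this
  · exact Nat.succ_injective ((Nat.prime_dvd_prime_iff_eq Nat.prime_three hk).1 (by lia)).symm

theorem even_perfect_sum_two_cubes_eq_28 (N : ℕ) (hperf : Nat.Perfect N)
    (heven : Even N) (a b : ℕ) (h : N = a ^ 3 + b ^ 3) : N = 28 := by
  obtain ⟨k, hq, rfl⟩ := Nat.eq_two_pow_mul_mersenne_of_even_perfect heven hperf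
  obtain rfl := eq_two_of_pow_three_add_pow_three_eq_two_pow_mul_mersenne hq h.symm
  rfl
end
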